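/- For a two-step truncated SVD (TT-SVD with two unfoldings): if T = Φ₁ R₁ + E₁ with Φ₁ᵀΦ₁ = I, Φ₁ᵀE₁ = 0, ‖E₁‖_F² ≤ ε₁²‖T‖_F², and R₁ = Φ₂ R₂ + E₂ with Φ₂ᵀΦ₂ = I, Φ₂ᵀE₂ = 0, ‖E₂‖_F² ≤ ε₂²‖R₁‖_F², then ‖T − Φ₁ Φ₂ R₂‖_F² ≤ (ε₁² + ε₂²)‖T‖_F². -/
import Mathlib


open Matrix

/-- Frobenius norm squared of a real matrix. -/
noncomputable def frobSq {m n : Type*} [Fintype m] [Fintype n] (M : Matrix m n ℝ) : ℝ :=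
  ∑ i, ∑ j, (M i j) ^ 2

lemma frobSq_eq_trace {m n : Type*} [Fintype m] [Fintype n] (M : Matrix m n ℝ) :
    frobSq M = Matrix.trace (Mᵀ * M) := by
  simp [frobSq, Matrix.trace, Matrix.mul_apply, Matrix.diag, pow_two]
  rw [Finset.sum_comm]

lemma frobSq_nonneg {m n : Type*} [Fintype m] [Fintype n] (M : Matrix m n ℝ) :
    0 ≤ frobSq M :=
  Finset.sum_nonneg fun _ _ => Finset.sum_nonneg fun _ _ => sq_nonneg _

lemma frobSq_pyth {m n r : Type*} [Fintype m] [Fintype n] [Fintype r] [DecidableEq r]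
    (Φ : Matrix (m) (r) ℝ) (E : Matrix (m) (n) ℝ) (X : Matrix (r) (n) ℝ)
    (hΦ : Φᵀ * Φ = 1) (horth : Φᵀ * E = 0) :
    frobSq (E + Φ * X) = frobSq E + frobSq X := by
  have hEΦ : Eᵀ * Φ = 0 := by
    have := congrArg Matrix.transpose horth
    simpa [Matrix.transpose_mul] using this
  rw [frobSq_eq_trace, frobSq_eq_trace, frobSq_eq_trace]
  rw [Matrix.transpose_add, Matrix.add_mul, Matrix.mul_add, Matrix.mul_add]
  rw [Matrix.transpose_mul]
  have h1 : Eᵀ * (Φ * X) = 0 := by rw [← Matrix.mul_assoc, hEΦ, Matrix.zero_mul]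
  have h2 : Xᵀ * Φᵀ * E = 0 := by rw [Matrix.mul_assoc, horth, Matrix.mul_zero]
  have h3 : Xᵀ * Φᵀ * (Φ * X) = Xᵀ * X := by
    rw [Matrix.mul_assoc, ← Matrix.mul_assoc Φᵀ, hΦ, Matrix.one_mul]
  rw [h1, h2, h3]
  simp [Matrix.trace_add]

/-- Two-step truncated SVD error bound:
`‖T − Φ₁Φ₂R₂‖_F² ≤ (ε₁² + ε₂²)‖T‖_F²`. -/
theorem stmt1 {m n r₁ r₂ : ℕ} (T : Matrix (Fin m) (Fin n) ℝ)
    (Φ₁ : Matrix (Fin m) (Fin r₁) ℝ) (R₁ : Matrix (Fin r₁) (Fin n) ℝ)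
    (Φ₂ : Matrix (Fin r₁) (Fin r₂) ℝ) (R₂ : Matrix (Fin r₂) (Fin n) ℝ)
    (ε₁ ε₂ : ℝ)
    (hΦ₁ : Φ₁ᵀ * Φ₁ = 1) (h₁orth : Φ₁ᵀ * (T - Φ₁ * R₁) = 0)
    (h₁err : frobSq (T - Φ₁ * R₁) ≤ ε₁ ^ 2 * frobSq T)
    (hΦ₂ : Φ₂ᵀ * Φ₂ = 1) (h₂orth : Φ₂ᵀ * (R₁ - Φ₂ * R₂) = 0)
    (h₂err : frobSq (R₁ - Φ₂ * R₂) ≤ ε₂ ^ 2 * frobSq R₁) :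
    frobSq (T - Φ₁ * (Φ₂ * R₂)) ≤ (ε₁ ^ 2 + ε₂ ^ 2) * frobSq T := by
  set E₁ := T - Φ₁ * R₁ with hE₁
  set E₂ := R₁ - Φ₂ * R₂ with hE₂
  have hdecomp : T - Φ₁ * (Φ₂ * R₂) = E₁ + Φ₁ * E₂ := by
    rw [hE₁, hE₂, Matrix.mul_sub]
    abel
  have hmain : frobSq (T - Φ₁ * (Φ₂ * R₂)) = frobSq E₁ + frobSq E₂ := by
    rw [hdecomp, frobSq_pyth Φ₁ E₁ E₂ hΦ₁ h₁orth]
  -- ‖T‖² = ‖E₁‖² + ‖R₁‖² ≥ ‖R₁‖²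
  have hT : frobSq T = frobSq E₁ + frobSq R₁ := by
    have : T = E₁ + Φ₁ * R₁ := by rw [hE₁]; abel
    rw [this, frobSq_pyth Φ₁ E₁ R₁ hΦ₁ h₁orth]
  have hR₁ : frobSq R₁ ≤ frobSq T := by
    rw [hT]; linarith [frobSq_nonneg E₁]
  have hε₂ : ε₂ ^ 2 * frobSq R₁ ≤ ε₂ ^ 2 * frobSq T :=
    mul_le_mul_of_nonneg_left hR₁ (sq_nonneg _)
  rw [hmain]
  nlinarith [h₁err, h₂err]
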